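/- For any element a of the free magma M on one generator with ℓ(a) > 1, the density of the principal subalgebra aM in M is zero, i.e., lim_{n→∞} |aM|_{≤n}/|M|_{≤n} = 0. -/

import Mathlib

/-!
Since `ℓ(a·x) = ℓ(a) ℓ(x)`, the map `x ↦ a·x` sends the elements of length at most
`n / ℓ(a) ≤ n / 2` onto `aM` truncated at length `n`. On the other hand `|M|_{≤n}` at least
doubles whenever `n` grows by `2`, so `|M|_{≤n/2} ≤ 2^{-⌊n/4⌋} |M|_{≤n}`.
-/

open Filter

def FreeMagma.len {α : Type*} : FreeMagma α → ℕ
  | FreeMagma.of _ => 1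
  | FreeMagma.mul x y => x.len + y.len

noncomputable def cnt {α : Type*} (X : Set (FreeMagma α)) (n : ℕ) : ℕ :=
  Nat.card {x : FreeMagma α // x ∈ X ∧ x.len = n}

noncomputable def cntLe {α : Type*} (X : Set (FreeMagma α)) (n : ℕ) : ℕ :=
  Nat.card {x : FreeMagma α // x ∈ X ∧ x.len ≤ n}

/-- Substitution product `a · x`: replace each leaf of `x` by `a`. -/
def magProd (a : FreeMagma Unit) : FreeMagma Unit → FreeMagma Unit
  | FreeMagma.of _ => a
  | FreeMagma.mul y z => FreeMagma.mul (magProd a y) (magProd a z)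

namespace FreeMagma

variable {α : Type*}

lemma len_pos (x : FreeMagma α) : 0 < x.len := by
  induction x with
  | ih1 => exact Nat.one_pos
  | ih2 _ _ hy _ => exact Nat.add_pos_left hy _

lemma finite_setOf_len_le [Finite α] (n : ℕ) : {x : FreeMagma α | x.len ≤ n}.Finite := by
  induction n with
  | zero => exact Set.finite_empty.subset fun x hx => x.len_pos.ne' (Nat.le_zero.1 hx)
  | succ n ih =>
    refine ((ih.image2 mul ih).union (Set.finite_range of)).subset ?_
    rintro (c | ⟨y, z⟩) hx
    · exact Or.inr ⟨c, rfl⟩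
    · have := y.len_pos; have := z.len_pos
      simp only [Set.mem_ofPred_eq, FreeMagma.len] at hx
      exact Or.inl (Set.mem_image2_of_mem (by simp; omega) (by simp; omega))

instance finite_len_le [Finite α] (X : Set (FreeMagma α)) (n : ℕ) :
    Finite {x : FreeMagma α // x ∈ X ∧ x.len ≤ n} :=
  ((finite_setOf_len_le n).subset fun _ hx => hx.2).to_subtype

end FreeMagma

section Counting

variable {α : Type*} [Finite α]

lemma cntLe_mono (X : Set (FreeMagma α)) : Monotone (cntLe X) := fun _ _ hmn =>
  Nat.card_le_card_of_injective (fun x => ⟨x.1, x.2.1, x.2.2.trans hmn⟩)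
    fun _ _ h => Subtype.ext (congrArg Subtype.val h :)

-- Prefixing by the distinct elements `of c` and `of c * of c` gives two disjoint copies.
lemma two_mul_cntLe_univ_le [Nonempty α] (n : ℕ) :
    2 * cntLe (Set.univ : Set (FreeMagma α)) n ≤ cntLe (Set.univ : Set (FreeMagma α)) (n + 2) := by
  obtain ⟨c⟩ := ‹Nonempty α›
  let f : {x : FreeMagma α // x ∈ Set.univ ∧ x.len ≤ n} ⊕
      {x : FreeMagma α // x ∈ Set.univ ∧ x.len ≤ n} →
      {x : FreeMagma α // x ∈ Set.univ ∧ x.len ≤ n + 2} :=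
    Sum.elim (fun x => ⟨.mul (.of c) x.1, trivial, by simp only [FreeMagma.len]; omega⟩)
      (fun x => ⟨.mul (.mul (.of c) (.of c)) x.1, trivial, by simp only [FreeMagma.len]; omega⟩)
  have hf : f.Injective := by
    rintro (x | x) (y | y) h <;>
      simp only [f, Sum.elim_inl, Sum.elim_inr, Subtype.mk.injEq] at h <;>
      injection h with h₁ h₂
    · exact congrArg Sum.inl (Subtype.ext h₂)
    · cases h₁
    · cases h₁
    · exact congrArg Sum.inr (Subtype.ext h₂)
  rw [two_mul, cntLe, ← Nat.card_sum]
  exact Nat.card_le_card_of_injective f hf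

lemma two_pow_mul_cntLe_univ_le [Nonempty α] (n k : ℕ) :
    2 ^ k * cntLe (Set.univ : Set (FreeMagma α)) n ≤
      cntLe (Set.univ : Set (FreeMagma α)) (n + 2 * k) := by
  induction k with
  | zero => simp
  | succ k ih =>
    calc 2 ^ (k + 1) * cntLe (Set.univ : Set (FreeMagma α)) n
        = 2 * (2 ^ k * cntLe (Set.univ : Set (FreeMagma α)) n) := by ring
      _ ≤ 2 * cntLe (Set.univ : Set (FreeMagma α)) (n + 2 * k) := by gcongr
      _ ≤ cntLe (Set.univ : Set (FreeMagma α)) (n + 2 * (k + 1)) := two_mul_cntLe_univ_le _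

end Counting

lemma len_magProd (a x : FreeMagma Unit) : (magProd a x).len = a.len * x.len := by
  induction x with
  | ih1 => simp [magProd, FreeMagma.len]
  | ih2 y z hy hz => simp only [magProd, FreeMagma.len] at *; rw [hy, hz, Nat.mul_add]

lemma cntLe_range_magProd_le (a : FreeMagma Unit) (n : ℕ) :
    cntLe (Set.range (magProd a)) n ≤ cntLe (Set.univ : Set (FreeMagma Unit)) (n / a.len) := by
  refine Nat.card_le_card_of_surjective (fun x => ⟨magProd a x.1, ⟨x.1, rfl⟩, ?_⟩) ?_
  · rw [len_magProd]
    exact (Nat.mul_le_mul_left _ x.2.2).trans (Nat.mul_div_le n a.len)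
  · rintro ⟨_, ⟨x, rfl⟩, hx⟩
    refine ⟨⟨x, trivial, ?_⟩, rfl⟩
    rw [len_magProd] at hx
    exact (Nat.le_div_iff_mul_le a.len_pos).2 (by linarith)

lemma two_pow_mul_cntLe_range_magProd_le (a : FreeMagma Unit) (ha : 1 < a.len) (n : ℕ) :
    2 ^ (n / 4) * cntLe (Set.range (magProd a)) n ≤ cntLe (Set.univ : Set (FreeMagma Unit)) n :=
  calc 2 ^ (n / 4) * cntLe (Set.range (magProd a)) n
      ≤ 2 ^ (n / 4) * cntLe (Set.univ : Set (FreeMagma Unit)) (n / 2) := by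
        gcongr
        exact (cntLe_range_magProd_le a n).trans
          (cntLe_mono _ (Nat.div_le_div_left ha (by norm_num)))
    _ ≤ cntLe (Set.univ : Set (FreeMagma Unit)) (n / 2 + 2 * (n / 4)) :=
        two_pow_mul_cntLe_univ_le _ _
    _ ≤ cntLe (Set.univ : Set (FreeMagma Unit)) n := cntLe_mono _ (by omega)

theorem stmt_9 (a : FreeMagma Unit) (ha : 1 < a.len) :
    Tendsto (fun n =>
        (cntLe (Set.range (magProd a)) n : ℝ) /
          (cntLe (Set.univ : Set (FreeMagma Unit)) n : ℝ))
      atTop (nhds 0) := by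
  have hbound : ∀ n, (cntLe (Set.range (magProd a)) n : ℝ) /
      (cntLe (Set.univ : Set (FreeMagma Unit)) n : ℝ) ≤ ((2 : ℝ) ^ (n / 4))⁻¹ := fun n =>
    div_le_of_le_mul₀ (by positivity) (by positivity)
      ((le_inv_mul_iff₀ (by positivity)).2 (mod_cast two_pow_mul_cntLe_range_magProd_le a ha n))
  refine squeeze_zero (fun n => by positivity) hbound ?_
  exact tendsto_inv_atTop_zero.comp ((tendsto_pow_atTop_atTop_of_one_lt one_lt_two).comp
    (Nat.tendsto_div_const_atTop four_ne_zero))
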